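/- For every L > 0 there exists ε > 0 such that the following holds: for every c with 1/L ≤ c ≤ L and every h* with 1/L ≤ h* ≤ L, set J = −c·h*; then every 2π-periodic C³ function h : ℝ → ℝ with h(θ) > 0 for all θ, satisfying −c·h(θ) + h(θ)³·(h'(θ) + h'''(θ)) = J for all θ ∈ ℝ and |h(θ) − h*| ≤ ε for all θ, satisfies h(θ) = h* for all θ. -/

import Mathlib

/-!
Multiplying the profile equation by `h - h*` turns it into an exact derivative:
with `E = (h - h*)²/2 + (h - h*) h'' - h'²/2` one has
`E' = (h - h*)(h' + h''') = c (h - h*)² / h³ ≥ 0`.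
So `E` is monotone and periodic, hence constant, which forces `(h - h*)² = 0` everywhere.
-/

open Real

lemma Function.Periodic.iteratedDeriv {𝕜 F : Type*} [NontriviallyNormedField 𝕜]
    [NormedAddCommGroup F] [NormedSpace 𝕜 F] {f : 𝕜 → F} {T : 𝕜}
    (hf : Function.Periodic f T) (n : ℕ) :
    Function.Periodic (_root_.iteratedDeriv n f) T := fun x => by
  rw [← congrFun (iteratedDeriv_comp_add_const n f T) x]
  exact congrArg (_root_.iteratedDeriv n · x) (funext hf)

lemma Function.Periodic.eq_of_monotone {α β : Type*} [AddCommGroup α] [LinearOrder α]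
    [IsOrderedAddMonoid α] [Archimedean α] [PartialOrder β] {f : α → β} {T : α}
    (hf : Function.Periodic f T) (hT : 0 < T) (hmono : Monotone f) (x y : α) : f y = f x := by
  obtain ⟨z, hz, hyz⟩ := hf.exists_mem_Ico hT y x
  have hzx : f x ≤ f z := hmono hz.1
  have hxz : f z ≤ f x := (hmono hz.2.le).trans_eq (hf x)
  exact hyz.trans (le_antisymm hxz hzx)

lemma Function.Periodic.eq_zero_of_hasDerivAt_of_nonneg {f f' : ℝ → ℝ} {T : ℝ}
    (hf : Function.Periodic f T) (hT : 0 < T) (hderiv : ∀ x, HasDerivAt f (f' x) x)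
    (hf' : 0 ≤ f') (x : ℝ) : f' x = 0 := by
  have hconst : f = fun _ => f x :=
    funext fun y => hf.eq_of_monotone hT (monotone_of_hasDerivAt_nonneg hderiv hf') x y
  exact (hderiv x).unique (hconst ▸ hasDerivAt_const x (f x))

noncomputable def profileEnergy (a : ℝ) (h : ℝ → ℝ) (x : ℝ) : ℝ :=
  (h x - a) ^ 2 / 2 + (h x - a) * iteratedDeriv 2 h x - deriv h x ^ 2 / 2

lemma Function.Periodic.profileEnergy {h : ℝ → ℝ} {T : ℝ} (hh : Function.Periodic h T)
    (a : ℝ) : Function.Periodic (profileEnergy a h) T := fun x => by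
  simp only [_root_.profileEnergy, hh x, hh.iteratedDeriv 2 x, ← iteratedDeriv_one,
    hh.iteratedDeriv 1 x]

lemma hasDerivAt_profileEnergy {h : ℝ → ℝ} (hh : ContDiff ℝ 3 h) (a x : ℝ) :
    HasDerivAt (profileEnergy a h)
      ((h x - a) * (deriv h x + iteratedDeriv 3 h x)) x := by
  have hasDerivAt_iteratedDeriv (m : ℕ) (hm : m < 3) :
      HasDerivAt (iteratedDeriv m h) (iteratedDeriv (m + 1) h x) x := by
    rw [iteratedDeriv_succ]
    exact ((hh.differentiable_iteratedDeriv m (by exact_mod_cast hm)) x).hasDerivAt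
  have H0 := hasDerivAt_iteratedDeriv 0 (by norm_num)
  have H1 := hasDerivAt_iteratedDeriv 1 (by norm_num)
  have H2 := hasDerivAt_iteratedDeriv 2 (by norm_num)
  simp only [iteratedDeriv_zero, iteratedDeriv_one, zero_add] at H0 H1
  refine ((((H0.sub_const a).pow 2).div_const 2).add ((H0.sub_const a).mul H2)
    |>.sub ((H1.pow 2).div_const 2)).congr_deriv ?_
  norm_num
  ring

theorem stmt_7 (L : ℝ) (hL : 0 < L) :
    ∃ ε : ℝ, 0 < ε ∧
      ∀ c : ℝ, 1 / L ≤ c → c ≤ L →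
        ∀ hstar : ℝ, 1 / L ≤ hstar → hstar ≤ L →
          ∀ h : ℝ → ℝ, Function.Periodic h (2 * π) → ContDiff ℝ 3 h →
            (∀ θ, 0 < h θ) →
            (∀ θ, -c * h θ + (h θ) ^ 3 * (deriv h θ + iteratedDeriv 3 h θ)
                = -c * hstar) →
            (∀ θ : ℝ, |h θ - hstar| ≤ ε) →
            ∀ θ : ℝ, h θ = hstar := by
  refine ⟨1, one_pos, fun c hc _ hstar _ _ h hper hh hpos hprofile _ θ => ?_⟩
  have hc_pos : 0 < c := (one_div_pos.2 hL).trans_le hc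
  set φ := fun θ => (h θ - hstar) * (deriv h θ + iteratedDeriv 3 h θ)
  have hφ_mul_cube (θ : ℝ) : h θ ^ 3 * φ θ = c * (h θ - hstar) ^ 2 := by
    linear_combination (h θ - hstar) * hprofile θ
  have hφ_nonneg : 0 ≤ φ := fun θ =>
    (mul_nonneg_iff_of_pos_left (pow_pos (hpos θ) 3)).1 (hφ_mul_cube θ ▸ by positivity)
  have hφ_zero : φ θ = 0 := (hper.profileEnergy hstar).eq_zero_of_hasDerivAt_of_nonneg two_pi_pos
    (hasDerivAt_profileEnergy hh hstar) hφ_nonneg θ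
  have hsq : c * (h θ - hstar) ^ 2 = 0 := by rw [← hφ_mul_cube, hφ_zero, mul_zero]
  simpa [hc_pos.ne', sub_eq_zero] using hsq
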